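/- Let d ≥ 1 and n ≥ 1, let M be a ZMod d-submodule of the discrete phase space V, and let I be a subset of Fin n. Then Submodule.map π_I (M^ω) = V_I ⊓ ((M ⊓ V_I)^ω); in other words, the image under the coordinate projection π_I of the symplectic complement of M equals the symplectic complement, computed inside the subspace V_I, of M ∩ V_I. -/

import Mathlib

open scoped BigOperators
open ComplexOrder

/-- The discrete phase space for `n` particles with local dimension `d`. -/
abbrev PhaseSpace (d n : ℕ) : Type := (Fin n → ZMod d) × (Fin n → ZMod d)

/-- The symplectic form on the discrete phase space. -/
def symp {d n : ℕ} (v w : PhaseSpace d n) : ZMod d :=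
  ∑ i, (v.1 i * w.2 i - v.2 i * w.1 i)

lemma symp_add_left {d n : ℕ} (a b w : PhaseSpace d n) :
    symp (a + b) w = symp a w + symp b w := by
  simp only [symp, Prod.fst_add, Prod.snd_add, Pi.add_apply, ← Finset.sum_add_distrib]
  exact Finset.sum_congr rfl fun i _ => by ring

lemma symp_smul_left {d n : ℕ} (c : ZMod d) (a w : PhaseSpace d n) :
    symp (c • a) w = c * symp a w := by
  simp only [symp, Prod.smul_fst, Prod.smul_snd, Pi.smul_apply, smul_eq_mul, Finset.mul_sum]
  exact Finset.sum_congr rfl fun i _ => by ring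

/-- The symplectic complement `M^ω` of a submodule of phase space. -/
def sympCompl {d n : ℕ} (M : Submodule (ZMod d) (PhaseSpace d n)) :
    Submodule (ZMod d) (PhaseSpace d n) where
  carrier := {v | ∀ m ∈ M, symp v m = 0}
  zero_mem' := by
    intro m _
    simp [symp]
  add_mem' := by
    intro a b ha hb m hm
    rw [Set.mem_setOf_eq] at ha hb
    show symp _ m = 0
    rw [symp_add_left, ha m hm, hb m hm, add_zero]
  smul_mem' := by
    intro c a ha m hm
    rw [Set.mem_setOf_eq] at ha
    show symp _ m = 0
    rw [symp_smul_left, ha m hm, mul_zero]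

/-- The submodule `V_I` of phase-space vectors supported on the coordinates in `I`. -/
def coordSub (d n : ℕ) (I : Set (Fin n)) : Submodule (ZMod d) (PhaseSpace d n) where
  carrier := {v | ∀ i ∉ I, v.1 i = 0 ∧ v.2 i = 0}
  zero_mem' := by
    intro i _
    simp
  add_mem' := by
    intro a b ha hb i hi
    obtain ⟨ha1, ha2⟩ := ha i hi
    obtain ⟨hb1, hb2⟩ := hb i hi
    constructor
    · simp [Prod.fst_add, Pi.add_apply, ha1, hb1]
    · simp [Prod.snd_add, Pi.add_apply, ha2, hb2]
  smul_mem' := by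
    intro c a ha i hi
    obtain ⟨h1, h2⟩ := ha i hi
    constructor
    · simp [Prod.smul_fst, Pi.smul_apply, h1]
    · simp [Prod.smul_snd, Pi.smul_apply, h2]

open Classical in
/-- The coordinate projection `π_I` of phase space onto the coordinates in `I`. -/
noncomputable def proj (d n : ℕ) (I : Set (Fin n)) :
    PhaseSpace d n →ₗ[ZMod d] PhaseSpace d n where
  toFun v := (fun i => if i ∈ I then v.1 i else 0, fun i => if i ∈ I then v.2 i else 0)
  map_add' := by
    intro a b
    refine Prod.ext ?_ ?_ <;> funext i <;> by_cases h : i ∈ I <;>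
      simp [h, Prod.fst_add, Prod.snd_add]
  map_smul' := by
    intro c a
    refine Prod.ext ?_ ?_ <;> funext i <;> by_cases h : i ∈ I <;>
      simp [h, Prod.smul_fst, Prod.smul_snd]

/-!
The inclusion `⊆` holds because `ω(π_I u, m) = ω(u, m)` for `m ∈ V_I`. Conversely, let `w ∈ V_I`
be `ω`-orthogonal to `M ∩ V_I`. The functional `m ↦ -ω(w, m)` on `M` vanishes on the kernel
`M ∩ V_I` of `π_{Iᶜ}|_M`, so it factors through `π_{Iᶜ}(M)`; since `ZMod d` is a self-injective
ring, the factor extends to a functional on `V`, which by nondegeneracy of `ω` is `ω(u, ·)`. Then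
`w + π_{Iᶜ} u ∈ M^ω` and it projects to `w`.
-/

namespace ZMod

theorem dvd_of_forall_mul_eq_zero_imp {d : ℕ} [NeZero d] {a b : ZMod d}
    (h : ∀ c : ZMod d, c * a = 0 → c * b = 0) : a ∣ b := by
  set g := a.val.gcd d
  obtain ⟨e, he⟩ : g ∣ d := Nat.gcd_dvd_right _ _
  have he_pos : 0 < e := Nat.pos_of_ne_zero fun h0 => NeZero.ne d (by rw [he, h0, mul_zero])
  have hea : (e : ZMod d) * a = 0 := by
    obtain ⟨k, hk⟩ : g ∣ a.val := Nat.gcd_dvd_left _ _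
    rw [← natCast_zmod_val a, ← Nat.cast_mul, natCast_eq_zero_iff, hk, he]
    exact ⟨k, by ring⟩
  have hgb : g ∣ b.val := by
    have heb := h _ hea
    rw [← natCast_zmod_val b, ← Nat.cast_mul, natCast_eq_zero_iff] at heb
    exact Nat.dvd_of_mul_dvd_mul_left he_pos (by rwa [mul_comm e g, ← he])
  obtain ⟨k, hk⟩ := hgb
  exact ⟨a⁻¹ * k, by rw [← mul_assoc, mul_inv_eq_gcd, ← Nat.cast_mul, ← hk, natCast_zmod_val]⟩

theorem baer_self (d : ℕ) [NeZero d] : Module.Baer (ZMod d) (ZMod d) := by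
  have : IsPrincipalIdealRing (ZMod d) :=
    .of_surjective (Int.castRingHom (ZMod d)) intCast_surjective
  intro I g
  obtain ⟨a, rfl⟩ := (IsPrincipalIdealRing.principal I).principal
  have ha : a ∈ Ideal.span {a} := Ideal.mem_span_singleton_self a
  obtain ⟨x, hx⟩ : a ∣ g ⟨a, ha⟩ := dvd_of_forall_mul_eq_zero_imp fun c hc => by
    rw [← smul_eq_mul, ← map_smul]
    convert map_zero g
    exact Subtype.ext hc
  refine ⟨LinearMap.toSpanSingleton _ _ x, fun y hy => ?_⟩
  obtain ⟨r, rfl⟩ := Ideal.mem_span_singleton'.mp hy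
  have hra : (⟨r * a, hy⟩ : Ideal.span {a}) = r • ⟨a, ha⟩ := rfl
  rw [hra, map_smul, hx, LinearMap.toSpanSingleton_apply, smul_eq_mul, smul_eq_mul, mul_assoc]

end ZMod

theorem Module.Baer.exists_comp_eq_of_ker_le {R Q M N : Type*} [Ring R] [AddCommGroup Q]
    [Module R Q] [AddCommGroup M] [Module R M] [AddCommGroup N] [Module R N]
    (hQ : Module.Baer R Q) (ψ : M →ₗ[R] N) (φ : M →ₗ[R] Q) (h : LinearMap.ker ψ ≤ LinearMap.ker φ) :
    ∃ G : N →ₗ[R] Q, G ∘ₗ ψ = φ := by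
  obtain ⟨G, hG⟩ := hQ.extension_property ((LinearMap.ker ψ).liftQ ψ le_rfl)
    (LinearMap.ker_eq_bot.mp ((LinearMap.ker ψ).ker_liftQ_eq_bot ψ le_rfl le_rfl))
    ((LinearMap.ker ψ).liftQ φ h)
  exact ⟨G, LinearMap.ext fun m => LinearMap.congr_fun hG ((LinearMap.ker ψ).mkQ m)⟩

section PhaseSpace

variable {d n : ℕ}

lemma symp_add_right (w a b : PhaseSpace d n) : symp w (a + b) = symp w a + symp w b := by
  simp only [symp, Prod.fst_add, Prod.snd_add, Pi.add_apply, ← Finset.sum_add_distrib]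
  exact Finset.sum_congr rfl fun i _ => by ring

lemma symp_smul_right (c : ZMod d) (w a : PhaseSpace d n) : symp w (c • a) = c * symp w a := by
  simp only [symp, Prod.smul_fst, Prod.smul_snd, Pi.smul_apply, smul_eq_mul, Finset.mul_sum]
  exact Finset.sum_congr rfl fun i _ => by ring

variable (d n) in
def sympBilin : LinearMap.BilinForm (ZMod d) (PhaseSpace d n) :=
  LinearMap.mk₂ (ZMod d) symp symp_add_left symp_smul_left symp_add_right symp_smul_right

@[simp]
lemma sympBilin_apply (v w : PhaseSpace d n) : sympBilin d n v w = symp v w := rfl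

lemma sympBilin_surjective : Function.Surjective (sympBilin d n) := by
  intro G
  refine ⟨(fun i => G (0, Pi.single i 1), fun i => -G (Pi.single i 1, 0)), ?_⟩
  ext i <;> simp [symp, Pi.single_apply]

open Classical in
lemma proj_apply (I : Set (Fin n)) (v : PhaseSpace d n) :
    proj d n I v =
      (fun i => if i ∈ I then v.1 i else 0, fun i => if i ∈ I then v.2 i else 0) := rfl

lemma symp_proj (I : Set (Fin n)) (u m : PhaseSpace d n) :
    symp (proj d n I u) m = symp u (proj d n I m) := by
  classical
  simp only [symp, proj_apply]
  refine Finset.sum_congr rfl fun i _ => ?_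
  by_cases h : i ∈ I <;> simp [h]

lemma proj_mem_coordSub (I : Set (Fin n)) (v : PhaseSpace d n) : proj d n I v ∈ coordSub d n I := by
  classical
  intro i hi
  simp [proj_apply, hi]

lemma proj_eq_self {I : Set (Fin n)} {v : PhaseSpace d n} (hv : v ∈ coordSub d n I) :
    proj d n I v = v := by
  classical
  ext i <;> by_cases h : i ∈ I <;> simp [proj_apply, h, hv i]

lemma proj_compl_eq_zero_iff {I : Set (Fin n)} {v : PhaseSpace d n} :
    proj d n Iᶜ v = 0 ↔ v ∈ coordSub d n I := by
  classical
  simp [proj_apply, Prod.ext_iff, funext_iff, coordSub, forall_and]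

lemma proj_proj_compl (I : Set (Fin n)) (v : PhaseSpace d n) : proj d n I (proj d n Iᶜ v) = 0 := by
  classical
  ext i <;> by_cases h : i ∈ I <;> simp [proj_apply, h]

lemma map_proj_sympCompl_le (M : Submodule (ZMod d) (PhaseSpace d n)) (I : Set (Fin n)) :
    Submodule.map (proj d n I) (sympCompl M) ≤ coordSub d n I ⊓ sympCompl (M ⊓ coordSub d n I) := by
  rintro _ ⟨u, hu, rfl⟩
  refine ⟨proj_mem_coordSub I u, fun m ⟨hmM, hmI⟩ => ?_⟩
  show symp (proj d n I u) m = 0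
  rw [symp_proj, proj_eq_self hmI]
  exact hu m hmM

lemma exists_add_proj_compl_mem_sympCompl [NeZero d] {M : Submodule (ZMod d) (PhaseSpace d n)}
    {I : Set (Fin n)} {w : PhaseSpace d n} (hw : w ∈ sympCompl (M ⊓ coordSub d n I)) :
    ∃ u, w + proj d n Iᶜ u ∈ sympCompl M := by
  obtain ⟨G, hG⟩ := (ZMod.baer_self d).exists_comp_eq_of_ker_le (proj d n Iᶜ ∘ₗ M.subtype)
    (-(sympBilin d n w ∘ₗ M.subtype)) fun m hm => by
      have hmI : (m : PhaseSpace d n) ∈ coordSub d n I := proj_compl_eq_zero_iff.mp hm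
      simp [hw m ⟨m.2, hmI⟩]
  obtain ⟨u, rfl⟩ := sympBilin_surjective G
  refine ⟨u, fun m hm => ?_⟩
  have hum : symp u (proj d n Iᶜ m) = -symp w m := LinearMap.congr_fun hG ⟨m, hm⟩
  show symp (w + proj d n Iᶜ u) m = 0
  rw [symp_add_left, symp_proj, hum, add_neg_cancel]

end PhaseSpace

theorem stmt3_general (d n : ℕ) (hd : 1 ≤ d)
    (M : Submodule (ZMod d) (PhaseSpace d n)) (I : Set (Fin n)) :
    Submodule.map (proj d n I) (sympCompl M) =
      coordSub d n I ⊓ sympCompl (M ⊓ coordSub d n I) := by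
  have : NeZero d := ⟨by omega⟩
  refine le_antisymm (map_proj_sympCompl_le M I) fun w ⟨hwI, hw⟩ => ?_
  obtain ⟨u, hu⟩ := exists_add_proj_compl_mem_sympCompl hw
  exact ⟨_, hu, by rw [map_add, proj_eq_self hwI, proj_proj_compl, add_zero]⟩

theorem stmt3 (d n : ℕ) (hd : 1 ≤ d) (hn : 1 ≤ n)
    (M : Submodule (ZMod d) (PhaseSpace d n)) (I : Set (Fin n)) :
    Submodule.map (proj d n I) (sympCompl M) =
      coordSub d n I ⊓ sympCompl (M ⊓ coordSub d n I) :=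
  stmt3_general d n hd M I
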